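/- For any graph G of order n ≥ 1 with maximum degree Δ, the L(2,1)-labeling number of the Mycielski graph satisfies max(n+1, 2(Δ+1)) ≤ λ(M(G)) ≤ (n+1) + λ(G). -/

import Mathlib

open SimpleGraph

abbrev MycVert (V : Type) : Type := V ⊕ V ⊕ Unit

def mycAdj {V : Type} (G : SimpleGraph V) : MycVert V → MycVert V → Prop
  | Sum.inl a, Sum.inl b => G.Adj a b
  | Sum.inl a, Sum.inr (Sum.inl b) => G.Adj a b
  | Sum.inr (Sum.inl a), Sum.inl b => G.Adj a b
  | Sum.inr (Sum.inl _), Sum.inr (Sum.inr _) => True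
  | Sum.inr (Sum.inr _), Sum.inr (Sum.inl _) => True
  | _, _ => False

/-- The Mycielski graph of `G`: `Sum.inl v` are original vertices, `Sum.inr (Sum.inl v)`
their copies, and `Sum.inr (Sum.inr ())` is the root. -/
def mycielski {V : Type} (G : SimpleGraph V) : SimpleGraph (MycVert V) where
  Adj := mycAdj G
  symm := by
    refine ⟨?_⟩
    rintro (a | a | a) (b | b | b) h <;>
      first | exact G.adj_symm h | exact G.symm h | trivial | exact h.elim
  loopless := by
    refine ⟨?_⟩
    rintro (a | a | a) h <;> first | exact G.irrefl h | exact G.loopless a h | exact h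

def IterMycVert (V : Type) : ℕ → Type
  | 0 => V
  | t + 1 => MycVert (IterMycVert V t)

/-- The `t`-th iterated Mycielski graph. -/
def iterMycielski {V : Type} (G : SimpleGraph V) : (t : ℕ) → SimpleGraph (IterMycVert V t)
  | 0 => G
  | t + 1 => mycielski (iterMycielski G t)

instance iterMycVertFintype (V : Type) [Fintype V] : (t : ℕ) → Fintype (IterMycVert V t)
  | 0 => inferInstanceAs (Fintype V)
  | t + 1 => letI := iterMycVertFintype V t
             inferInstanceAs (Fintype (MycVert (IterMycVert V t)))

/-- `f` is an `L(2,1)`-labeling of `G`. -/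
def IsL21Labeling {V : Type} (G : SimpleGraph V) (f : V → ℕ) : Prop :=
  (∀ x y, G.Adj x y → 2 ≤ ((f x : ℤ) - (f y : ℤ)).natAbs) ∧
  (∀ x y, G.dist x y = 2 → f x ≠ f y)

/-- The `L(2,1)`-labeling number `λ(G)`: the least `k` such that `G` has an
`L(2,1)`-labeling with labels in `{0, …, k}`. -/
noncomputable def lambdaNumber {V : Type} (G : SimpleGraph V) : ℕ :=
  sInf {k | ∃ f : V → ℕ, IsL21Labeling G f ∧ ∀ v, f v ≤ k}


/-!
For the lower bounds, the root of `M(G)` is adjacent to the `n` copies, which are pairwise at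
distance 2: they need `n` distinct labels in `{0, …, λ}`, none of them among the (at least two)
labels there within 1 of the root's label, so `n + 2 ≤ λ + 1`. For a vertex `v` of maximum degree `Δ ≥ 1`, the closed neighbourhood of `v`,
its copy and the root are `2Δ + 3` vertices pairwise at distance at most 2, so they need distinct
labels.

For the upper bound, shift an optimal labeling of `G` up by one, put the root at `0` and give the
copies the distinct labels `λ(G) + 2, …, λ(G) + n + 1`, the lowest one to the copy of a vertex of
largest label: its neighbours have labels below `λ(G)`.
-/

open Finset Function

namespace SimpleGraph

variable {W : Type*} {H : SimpleGraph W} {x y z : W}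

lemma edist_le_two_of_adj (h : H.Adj x y) : H.edist x y ≤ 2 :=
  (edist_eq_one_iff_adj.mpr h).le.trans one_le_two

lemma edist_le_two_of_adj_of_adj (hxz : H.Adj x z) (hzy : H.Adj z y) : H.edist x y ≤ 2 :=
  calc H.edist x y ≤ H.edist x z + H.edist z y := H.edist_triangle
    _ = 2 := by rw [edist_eq_one_iff_adj.mpr hxz, edist_eq_one_iff_adj.mpr hzy, one_add_one_eq_two]

lemma exists_adj_adj_of_dist_eq_two (h : H.dist x y = 2) : ∃ z, H.Adj x z ∧ H.Adj z y := by
  obtain ⟨-, -, z, hz⟩ := edist_eq_two_iff.mp ((ENat.toNat_eq_iff two_ne_zero).mp h)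
  exact ⟨z, hz.1, hz.2.symm⟩

lemma edist_eq_one_or_eq_two (hxy : x ≠ y) (h : H.edist x y ≤ 2) :
    H.edist x y = 1 ∨ H.edist x y = 2 := by
  have h0 := H.edist_eq_zero_iff.not.mpr hxy
  lift H.edist x y to ℕ using ne_top_of_le_ne_top (by simp) h with d
  norm_cast at *
  omega

end SimpleGraph

namespace IsL21Labeling

variable {W : Type} {H : SimpleGraph W} {f : W → ℕ} {K : ℕ}

lemma ne_of_edist_le_two (hf : IsL21Labeling H f) {x y : W} (hxy : x ≠ y)
    (h : H.edist x y ≤ 2) : f x ≠ f y := by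
  rcases edist_eq_one_or_eq_two hxy h with h1 | h2
  · have := hf.1 x y (edist_eq_one_iff_adj.mp h1)
    omega
  · exact hf.2 x y (by simp [SimpleGraph.dist, h2])

lemma injOn_of_edist_le_two (hf : IsL21Labeling H f) {s : Set W}
    (hs : ∀ x ∈ s, ∀ y ∈ s, x ≠ y → H.edist x y ≤ 2) : s.InjOn f := fun x hx y hy hfxy =>
  by_contra fun hxy => hf.ne_of_edist_le_two hxy (hs x hx y hy hxy) hfxy

lemma card_le_of_edist_le_two (hf : IsL21Labeling H f) (hbd : ∀ v, f v ≤ K) {s : Finset W}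
    (hs : ∀ x ∈ s, ∀ y ∈ s, x ≠ y → H.edist x y ≤ 2) : #s ≤ K + 1 := by
  simpa using card_le_card_of_injOn f (fun v _ => by simpa [Nat.lt_succ_iff] using hbd v)
    (hf.injOn_of_edist_le_two hs) (t := range (K + 1))

lemma card_add_one_le_of_forall_adj (hf : IsL21Labeling H f) (hbd : ∀ v, f v ≤ K) {x : W}
    {s : Finset W} (hs : ∀ y ∈ s, H.Adj x y) (hne : s.Nonempty) : #s + 1 ≤ K := by
  obtain ⟨y₀, hy₀⟩ := hne
  have hgap (y) (hy : y ∈ s) := hf.1 x y (hs y hy)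
  have := hgap y₀ hy₀
  have := hbd x
  have := hbd y₀
  -- Two labels in `{0, …, K}` within 1 of `f x`, which no neighbour of `x` can use.
  obtain ⟨a, haK, hax, hxa⟩ : ∃ a, a + 1 ≤ K ∧ a ≤ f x ∧ f x ≤ a + 1 :=
    ⟨min (f x) (K - 1), by omega, by omega, by omega⟩
  have hdisj : Disjoint (s.image f) {a, a + 1} := by
    simp only [Finset.disjoint_left, mem_image, mem_insert, mem_singleton]
    rintro _ ⟨y, hy, rfl⟩
    have := hgap y hy
    omega
  have hinj : Set.InjOn f s := hf.injOn_of_edist_le_two fun y hy y' hy' _ =>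
    edist_le_two_of_adj_of_adj (hs y hy).symm (hs y' hy')
  have hsub : s.image f ∪ {a, a + 1} ⊆ range (K + 1) := by
    intro c
    simp only [mem_union, mem_image, mem_insert, mem_singleton, mem_range]
    rintro (⟨y, -, rfl⟩ | rfl | rfl)
    · exact Nat.lt_succ_of_le (hbd y)
    all_goals omega
  have := card_le_card hsub
  rw [card_union_of_disjoint hdisj, card_image_of_injOn hinj, card_pair (by omega),
    card_range] at this
  omega

lemma of_injective_two_mul {e : W → ℕ} (he : Injective e) : IsL21Labeling H (2 * e ·) := by
  refine ⟨fun x y hxy => ?_, fun x y hd => ?_⟩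
  · have := he.ne hxy.ne
    dsimp only
    omega
  · have := he.ne (dist_ne_zero_iff_ne_and_reachable.mp (by rw [hd]; omega)).1
    dsimp only
    omega

end IsL21Labeling

section lambdaNumber

variable {W : Type} {H : SimpleGraph W} {f : W → ℕ} {K : ℕ}

lemma lambdaNumber_le (hf : IsL21Labeling H f) (hbd : ∀ v, f v ≤ K) : lambdaNumber H ≤ K :=
  Nat.sInf_le ⟨f, hf, hbd⟩

lemma exists_isL21Labeling_le_lambdaNumber [Finite W] (H : SimpleGraph W) :
    ∃ f, IsL21Labeling H f ∧ ∀ v, f v ≤ lambdaNumber H := by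
  obtain ⟨e, he⟩ := Countable.exists_injective_nat W
  obtain ⟨M, hM⟩ := (Set.finite_range e).bddAbove
  apply Nat.sInf_mem (s := {k | ∃ f : W → ℕ, IsL21Labeling H f ∧ ∀ v, f v ≤ k})
  refine ⟨2 * M, _, IsL21Labeling.of_injective_two_mul he, fun v => ?_⟩
  have := hM (Set.mem_range_self v)
  omega

end lambdaNumber

namespace mycielski

variable {V : Type} {G : SimpleGraph V} {a b : V} {u : Unit}

@[simp] lemma adj_inl_inl : (mycielski G).Adj (.inl a) (.inl b) ↔ G.Adj a b := Iff.rfl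
@[simp] lemma adj_inl_copy : (mycielski G).Adj (.inl a) (.inr (.inl b)) ↔ G.Adj a b := Iff.rfl
@[simp] lemma adj_copy_inl : (mycielski G).Adj (.inr (.inl a)) (.inl b) ↔ G.Adj a b := Iff.rfl
@[simp] lemma adj_copy_root : (mycielski G).Adj (.inr (.inl a)) (.inr (.inr u)) := trivial
@[simp] lemma adj_root_copy : (mycielski G).Adj (.inr (.inr u)) (.inr (.inl a)) := trivial
@[simp] lemma not_adj_inl_root : ¬(mycielski G).Adj (.inl a) (.inr (.inr u)) := id
@[simp] lemma not_adj_root_inl : ¬(mycielski G).Adj (.inr (.inr u)) (.inl a) := id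
@[simp] lemma not_adj_copy_copy : ¬(mycielski G).Adj (.inr (.inl a)) (.inr (.inl b)) := id
@[simp] lemma not_adj_root_root {u' : Unit} :
    ¬(mycielski G).Adj (.inr (.inr u)) (.inr (.inr u')) := id

end mycielski

namespace IsL21Labeling

variable {V : Type} {G : SimpleGraph V} {f : MycVert V → ℕ} {K : ℕ}

lemma card_add_one_le_of_mycielski [Fintype V] [Nonempty V]
    (hf : IsL21Labeling (mycielski G) f) (hbd : ∀ v, f v ≤ K) : Fintype.card V + 1 ≤ K := by
  simpa using hf.card_add_one_le_of_forall_adj hbd (x := .inr (.inr ()))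
    (s := univ.map (Embedding.inl.trans Embedding.inr)) (by simp) (by simp)

lemma two_mul_degree_add_one_le_of_mycielski [Fintype V] [DecidableRel G.Adj]
    (hf : IsL21Labeling (mycielski G) f) (hbd : ∀ v, f v ≤ K) {v : V} (hv : 0 < G.degree v) :
    2 * (G.degree v + 1) ≤ K := by
  classical
  obtain ⟨w, hw⟩ := (G.degree_pos_iff_exists_adj v).mp hv
  set N := insert v (G.neighborFinset v)
  -- Any two of these vertices are joined through `v`, `w`, their copies `v'`, `w'`, or the root.
  have hclose : ∀ x ∈ N.disjSum (N.disjSum univ), ∀ y ∈ N.disjSum (N.disjSum univ), x ≠ y →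
      (mycielski G).edist x y ≤ 2 := by
    rintro (a | a | ⟨⟩) ha (b | b | ⟨⟩) hb hab <;>
      simp only [N, inl_mem_disjSum, inr_mem_disjSum, mem_insert, mem_neighborFinset,
        mem_univ] at ha hb <;>
      (try rcases ha with ha | ha) <;> (try rcases hb with hb | hb) <;>
      (try subst a) <;> (try subst b) <;>
      first
      | exact absurd rfl hab
      | (apply edist_le_two_of_adj; simp_all [G.adj_comm]; done)
      | (apply edist_le_two_of_adj_of_adj (z := .inl v) <;> simp_all [G.adj_comm] <;> done)
      | (apply edist_le_two_of_adj_of_adj (z := .inl w) <;> simp_all [G.adj_comm] <;> done)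
      | (apply edist_le_two_of_adj_of_adj (z := .inr (.inl v)) <;> simp_all [G.adj_comm] <;> done)
      | (apply edist_le_two_of_adj_of_adj (z := .inr (.inl w)) <;> simp_all [G.adj_comm] <;> done)
      | (apply edist_le_two_of_adj_of_adj (z := .inr (.inr ())) <;> simp_all)
  have := hf.card_le_of_edist_le_two hbd hclose
  rw [card_disjSum, card_disjSum, card_insert_of_notMem (by simp), card_neighborFinset_eq_degree,
    card_univ, Fintype.card_unit] at this
  omega

lemma two_mul_maxDegree_add_one_le_of_mycielski [Fintype V] [DecidableRel G.Adj] [Nonempty V]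
    (hf : IsL21Labeling (mycielski G) f) (hbd : ∀ v, f v ≤ K) : 2 * (G.maxDegree + 1) ≤ K := by
  obtain ⟨v, hv⟩ := G.exists_maximal_degree_vertex
  rw [hv]
  rcases Nat.eq_zero_or_pos (G.degree v) with h0 | hpos
  · have := hf.card_add_one_le_of_mycielski hbd
    have := Fintype.card_pos (α := V)
    omega
  · exact hf.two_mul_degree_add_one_le_of_mycielski hbd hpos

end IsL21Labeling

section

variable {V : Type} {G : SimpleGraph V} {f h : V → ℕ} {k : ℕ}

def mycielskiLabeling (f : V → ℕ) (k : ℕ) (h : V → ℕ) : MycVert V → ℕ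
  | .inl v => f v + 1
  | .inr (.inl v) => k + 2 + h v
  | .inr (.inr _) => 0

open mycielski in
lemma IsL21Labeling.mycielskiLabeling (hf : IsL21Labeling G f) (hbd : ∀ v, f v ≤ k)
    (hh : Injective h) (hgap : ∀ a b, G.Adj a b → f a < k + h b) :
    IsL21Labeling (mycielski G) (mycielskiLabeling f k h) := by
  refine ⟨?_, ?_⟩
  · rintro (a | a | ⟨⟩) (b | b | ⟨⟩) hab <;>
      simp only [adj_inl_inl, adj_inl_copy, adj_copy_inl, adj_copy_root, adj_root_copy,
        not_adj_inl_root, not_adj_root_inl, not_adj_copy_copy, not_adj_root_root] at hab <;>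
      simp only [_root_.mycielskiLabeling]
    · have := hf.1 a b hab
      omega
    · have := hgap a b hab
      omega
    · have := hgap b a hab.symm
      omega
    all_goals omega
  · intro x y hd
    have hxy : x ≠ y := (dist_ne_zero_iff_ne_and_reachable.mp (by rw [hd]; omega)).1
    obtain ⟨z, hxz, hzy⟩ := exists_adj_adj_of_dist_eq_two hd
    rcases x with a | a | ⟨⟩ <;> rcases y with b | b | ⟨⟩ <;>
      simp only [_root_.mycielskiLabeling, ne_eq, Sum.inl.injEq, Sum.inr.injEq, not_true]
        at hxy ⊢
    · obtain ⟨c, hac, hcb⟩ : ∃ c, G.Adj a c ∧ G.Adj c b := by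
        rcases z with c | c | ⟨⟩
        exacts [⟨c, hxz, hzy⟩, ⟨c, hxz, hzy⟩, hxz.elim]
      have := hf.ne_of_edist_le_two hxy (edist_le_two_of_adj_of_adj hac hcb)
      omega
    · have := hbd a
      omega
    · omega
    · have := hbd b
      omega
    · have := hh.ne hxy
      omega
    all_goals omega

lemma lambdaNumber_mycielski_le [Fintype V] [Nonempty V] (G : SimpleGraph V) :
    lambdaNumber (mycielski G) ≤ Fintype.card V + 1 + lambdaNumber G := by
  obtain ⟨f, hf, hbd⟩ := exists_isL21Labeling_le_lambdaNumber G
  obtain ⟨m, hm⟩ := Finite.exists_max f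
  -- `e` numbers the vertices starting from `m`, whose copy thus gets the label `λ(G) + 2`.
  have : NeZero (Fintype.card V) := ⟨Fintype.card_ne_zero⟩
  let e := (Fintype.equivFin V).trans (Equiv.swap (Fintype.equivFin V m) 0)
  have he : ((e m : Fin _) : ℕ) = 0 := by simp [e]
  refine lambdaNumber_le (hf.mycielskiLabeling hbd (h := fun v => e v)
    (fun _ _ hvw => e.injective (Fin.ext hvw)) ?_) ?_
  · intro a b hab
    by_cases hb : b = m
    · subst hb
      have := hf.1 a b hab
      have := hm a
      have := hbd b
      simp only [he]
      omega
    · have : (e b : ℕ) ≠ 0 := fun h0 => hb (e.injective (Fin.ext (h0.trans he.symm)))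
      have := hbd a
      omega
  · rintro (a | a | ⟨⟩) <;> simp only [mycielskiLabeling]
    · have := hbd a
      omega
    · have := (e a).isLt
      omega
    · omega

end

open scoped Classical in
/-- For any graph `G` of order `n ≥ 1` with maximum degree `Δ`,
`max (n+1) (2*(Δ+1)) ≤ λ(M(G)) ≤ (n+1) + λ(G)`. -/
theorem lambdaNumber_mycielski_bounds {V : Type} [Fintype V] (G : SimpleGraph V) (n : ℕ)
    (hn : Fintype.card V = n) (h1 : 1 ≤ n) :
    max (n + 1) (2 * (G.maxDegree + 1)) ≤ lambdaNumber (mycielski G) ∧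
    lambdaNumber (mycielski G) ≤ (n + 1) + lambdaNumber G := by
  subst hn
  have : Nonempty V := Fintype.card_pos_iff.mp h1
  obtain ⟨f, hf, hbd⟩ := exists_isL21Labeling_le_lambdaNumber (mycielski G)
  exact ⟨max_le (hf.card_add_one_le_of_mycielski hbd)
    (hf.two_mul_maxDegree_add_one_le_of_mycielski hbd), lambdaNumber_mycielski_le G⟩
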